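/- Let R be a ring and e ∈ R an idempotent such that the two-sided ideal ReR is projective as a right R-module. Then Re is projective as a right eRe-module. -/

import Mathlib

variable {R : Type*} [Ring R]

/-- The corner ring `eRe` associated to an idempotent `e` of `R`. -/
def Corner (e : R) (_he : IsIdempotentElem e) : Type _ := {x : R // e * x * e = x}

namespace Corner

variable {e : R} {he : IsIdempotentElem e}

instance : Zero (Corner e he) := ⟨⟨0, by simp⟩⟩
instance : Add (Corner e he) :=
  ⟨fun x y => ⟨x.1 + y.1, by rw [mul_add, add_mul, x.2, y.2]⟩⟩
instance : Neg (Corner e he) := ⟨fun x => ⟨-x.1, by rw [mul_neg, neg_mul, x.2]⟩⟩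
instance : Sub (Corner e he) :=
  ⟨fun x y => ⟨x.1 - y.1, by rw [mul_sub, sub_mul, x.2, y.2]⟩⟩
instance : SMul ℕ (Corner e he) :=
  ⟨fun n x => ⟨n • x.1, by rw [mul_smul_comm, smul_mul_assoc, x.2]⟩⟩
instance : SMul ℤ (Corner e he) :=
  ⟨fun n x => ⟨n • x.1, by rw [mul_smul_comm, smul_mul_assoc, x.2]⟩⟩

instance : AddCommGroup (Corner e he) :=
  Function.Injective.addCommGroup (fun x : Corner e he => x.1) Subtype.val_injective
    rfl (fun _ _ => rfl) (fun _ => rfl) (fun _ _ => rfl) (fun _ _ => rfl) (fun _ _ => rfl)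

instance : One (Corner e he) := ⟨⟨e, by rw [he, he]⟩⟩

instance : Mul (Corner e he) :=
  ⟨fun x y => ⟨x.1 * y.1, by
    conv_lhs => rw [← x.2, ← y.2]
    conv_rhs => rw [← x.2, ← y.2]
    simp only [← mul_assoc, he.eq]
    rw [mul_assoc (e * x.1 * e * e * y.1) e e, he.eq]⟩⟩

instance instRing : Ring (Corner e he) where
  __ := (inferInstance : AddCommGroup (Corner e he))
  mul_assoc x y z := Subtype.ext (mul_assoc x.1 y.1 z.1)
  one_mul x := Subtype.ext (by
    show e * x.1 = x.1
    conv_lhs => rw [← x.2]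
    rw [← mul_assoc, ← mul_assoc, he, x.2])
  mul_one x := Subtype.ext (by
    show x.1 * e = x.1
    conv_lhs => rw [← x.2]
    rw [mul_assoc, he, x.2])
  left_distrib x y z := Subtype.ext (mul_add x.1 y.1 z.1)
  right_distrib x y z := Subtype.ext (add_mul x.1 y.1 z.1)
  zero_mul x := Subtype.ext (zero_mul x.1)
  mul_zero x := Subtype.ext (mul_zero x.1)

end Corner

/-- The two-sided ideal `ReR` generated by an element `e`. -/
def TwoSidedIdeal.gen {R : Type*} [Ring R] (e : R) : TwoSidedIdeal R :=
  TwoSidedIdeal.span {e}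

/-- The left ideal `Re`, regarded as a right module over the corner ring `eRe`. -/
def ReC {R : Type*} [Ring R] (e : R) (_he : IsIdempotentElem e) : Type _ :=
  {x : R // x ∈ Submodule.span R {e}}

namespace ReC

variable {R : Type*} [Ring R] {e : R} {he : IsIdempotentElem e}

instance : AddCommGroup (ReC e he) :=
  inferInstanceAs (AddCommGroup (Submodule.span R ({e} : Set R)))

instance : SMul (Corner e he)ᵐᵒᵖ (ReC e he) :=
  ⟨fun c x => ⟨x.1 * c.unop.1, by
    obtain ⟨r, hr⟩ := Submodule.mem_span_singleton.1 x.2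
    refine Submodule.mem_span_singleton.2 ⟨r * e * e * c.unop.1, ?_⟩
    have hc := c.unop.2
    simp only [smul_eq_mul]
    rw [← hr]; simp only [smul_eq_mul]
    conv_rhs => rw [← hc]
    simp only [mul_assoc]⟩⟩

instance : Module (Corner e he)ᵐᵒᵖ (ReC e he) where
  one_smul x := Subtype.ext (by
    show x.1 * e = x.1
    obtain ⟨r, hr⟩ := Submodule.mem_span_singleton.1 x.2
    rw [← hr]; simp only [smul_eq_mul]; rw [mul_assoc, he])
  mul_smul c d x := Subtype.ext (by
    show x.1 * (d.unop.1 * c.unop.1) = x.1 * d.unop.1 * c.unop.1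
    rw [mul_assoc])
  smul_zero c := Subtype.ext (zero_mul _)
  smul_add c x y := Subtype.ext (add_mul x.1 y.1 c.unop.1)
  add_smul c d x := Subtype.ext (mul_add x.1 c.unop.1 d.unop.1)
  zero_smul x := Subtype.ext (mul_zero x.1)

end ReC

/-! `ReR` is generated as a right `R`-module by `Re`, so `(Re →₀ R) → ReR`, `f ↦ ∑ y f(y)`, is
onto and, `ReR` being projective, has a right `R`-linear section `s`. Compressing the coefficients
of `s` by `r ↦ ere` gives an `eRe`-linear section of `(Re →₀ eRe) → Re`: for `y ∈ Re` we have
`y (ere) = y r e`, and `ReR · e = Re`. So `Re` is a direct summand of a free `eRe`-module. -/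

open MulOpposite

variable {e : R} {he : IsIdempotentElem e}

namespace Corner

def compressOp (he : IsIdempotentElem e) : Rᵐᵒᵖ →+ (Corner e he)ᵐᵒᵖ where
  toFun r := op ⟨e * r.unop * e, by rw [← mul_assoc, ← mul_assoc, he.eq, mul_assoc, he.eq]⟩
  map_zero' := congrArg op <| Subtype.ext <| by
    show e * 0 * e = 0
    rw [mul_zero, zero_mul]
  map_add' r s := congrArg op <| Subtype.ext <| by
    show e * (r.unop + s.unop) * e = e * r.unop * e + e * s.unop * e
    rw [mul_add, add_mul]

lemma compressOp_op_mul (c : (Corner e he)ᵐᵒᵖ) (r : Rᵐᵒᵖ) :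
    compressOp he (op c.unop.1 * r) = c * compressOp he r := by
  refine congrArg op <| Subtype.ext ?_
  show e * (r.unop * c.unop.1) * e = e * r.unop * e * c.unop.1
  rw [← c.unop.2]
  simp only [← mul_assoc, he.mul_mul_self]

end Corner

namespace ReC

lemma val_mul_idem (y : ReC e he) : y.1 * e = y.1 := by
  obtain ⟨a, ha⟩ := Submodule.mem_span_singleton.1 y.2
  rw [← ha, smul_eq_mul, mul_assoc, he.eq]

def toGen (y : ReC e he) : TwoSidedIdeal.gen e :=
  ⟨y.1, val_mul_idem y ▸ TwoSidedIdeal.mul_mem_left _ y.1 e (TwoSidedIdeal.subset_span rfl)⟩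

lemma span_range_toGen : Submodule.span Rᵐᵒᵖ (Set.range (toGen (he := he))) = ⊤ := by
  set N := Submodule.span Rᵐᵒᵖ (Set.range (toGen (he := he)))
  have hN : ∀ x ∈ TwoSidedIdeal.gen e,
      x ∈ N.toAddSubgroup.map (TwoSidedIdeal.coeAddMonoidHom _) := by
    intro x hx
    rw [TwoSidedIdeal.gen, TwoSidedIdeal.mem_span_iff_mem_addSubgroup_closure] at hx
    refine AddSubgroup.closure_le _ |>.2 ?_ hx
    rintro _ ⟨_, ⟨a, -, e', he', rfl⟩, b, -, rfl⟩
    rw [Set.mem_singleton_iff.1 he']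
    exact ⟨op b • toGen ⟨a * e, Submodule.mem_span_singleton.2 ⟨a, rfl⟩⟩,
      N.smul_mem _ (Submodule.subset_span ⟨_, rfl⟩), rfl⟩
  refine eq_top_iff.2 fun x _ => ?_
  obtain ⟨y, hy, hyx⟩ := hN x.1 x.2
  rwa [← Subtype.ext hyx]

lemma linearCombination_toGen_surjective :
    Function.Surjective (Finsupp.linearCombination Rᵐᵒᵖ (toGen (he := he))) := by
  rw [← LinearMap.range_eq_top, Finsupp.range_linearCombination, span_range_toGen]

noncomputable def compressLift (s : TwoSidedIdeal.gen e →ₗ[Rᵐᵒᵖ] (ReC e he →₀ Rᵐᵒᵖ)) :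
    ReC e he →ₗ[(Corner e he)ᵐᵒᵖ] (ReC e he →₀ (Corner e he)ᵐᵒᵖ) where
  toFun y := Finsupp.mapRange.addMonoidHom (Corner.compressOp he) (s (toGen y))
  map_add' y z := by rw [← map_add, ← map_add]; rfl
  map_smul' c y := by
    have : toGen (c • y) = op c.unop.1 • toGen y := rfl
    ext z
    simp [this, Corner.compressOp_op_mul]

lemma val_linearCombination_compressOp (f : ReC e he →₀ Rᵐᵒᵖ) :
    (Finsupp.linearCombination (Corner e he)ᵐᵒᵖ id
        (Finsupp.mapRange.addMonoidHom (Corner.compressOp he) f)).1 =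
      (Finsupp.linearCombination Rᵐᵒᵖ toGen f).1 * e := by
  induction f using Finsupp.induction_linear with
  | zero => simp only [map_zero]; exact (zero_mul e).symm
  | add f g hf hg =>
    simp only [map_add]
    exact (congrArg₂ (· + ·) hf hg).trans (add_mul _ _ _).symm
  | single z r =>
    simp only [Finsupp.mapRange.addMonoidHom_apply, Finsupp.mapRange_single,
      Finsupp.linearCombination_single, id]
    show z.1 * (e * r.unop * e) = z.1 * r.unop * e
    rw [← val_mul_idem z]
    simp only [← mul_assoc, he.mul_mul_self]

lemma linearCombination_compressLift {s : TwoSidedIdeal.gen e →ₗ[Rᵐᵒᵖ] (ReC e he →₀ Rᵐᵒᵖ)}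
    (hs : Finsupp.linearCombination Rᵐᵒᵖ toGen ∘ₗ s = LinearMap.id) (y : ReC e he) :
    Finsupp.linearCombination (Corner e he)ᵐᵒᵖ id (compressLift s y) = y := by
  refine Subtype.ext <| (val_linearCombination_compressOp _).trans ?_
  rw [← LinearMap.comp_apply, hs]
  exact val_mul_idem y

end ReC

/-- If `e` is an idempotent of `R` such that `ReR` is projective as a right `R`-module,
then `Re` is projective as a right `eRe`-module. -/
theorem re_projective_over_corner {R : Type*} [Ring R] (e : R)
    (he : IsIdempotentElem e)
    (h : Module.Projective Rᵐᵒᵖ (TwoSidedIdeal.gen e)) :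
    Module.Projective (Corner e he)ᵐᵒᵖ (ReC e he) := by
  obtain ⟨s, hs⟩ := Module.projective_lifting_property _ LinearMap.id
    (ReC.linearCombination_toGen_surjective (he := he))
  exact .of_split (ReC.compressLift s) (Finsupp.linearCombination _ id)
    (LinearMap.ext (ReC.linearCombination_compressLift hs))
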